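/- Let τ be a random variable taking values in the positive integers, and for each i ≥ 1 let L_i = 1{τ ≥ i}. Let (W_i, V_i)_{i≥1} be a process where, conditioned on the event {L_i = 1} and on (L^{i−1}, V^{i−1}, X), the channel output V_i given W_i has law Γ_{V|W}, and the Markov chain V_i → W_i → (L^{i−1}, V^{i−1}, X) holds. Then I(V^τ; X) ≤ H(τ) + C·E[τ], where C = max_{P_W} I(W;V) is the capacity of the DMC Γ_{V|W} and V^τ denotes the variable-length output string. -/

import Mathlib

noncomputable section
open scoped BigOperators
attribute [local instance] Classical.propDecidable

/-- Shannon entropy (base 2), convention `0 log 0 = 0`. -/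
noncomputable def ent {Ω S : Type*} [Fintype Ω] [DecidableEq S] (μ : Ω → ℝ) (f : Ω → S) : ℝ :=
  ∑ s ∈ Finset.univ.image f,
    -((∑ ω ∈ Finset.univ.filter fun ω => f ω = s, μ ω) *
      Real.logb 2 (∑ ω ∈ Finset.univ.filter fun ω => f ω = s, μ ω))

/-- Mutual information (base 2). -/
noncomputable def mi {Ω A B : Type*} [Fintype Ω] [DecidableEq A] [DecidableEq B]
    (μ : Ω → ℝ) (f : Ω → A) (g : Ω → B) : ℝ :=
  ent μ f + ent μ g - ent μ (fun ω => (f ω, g ω))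

/-- Capacity `C = max_{P_W} I(W;V)` of the DMC `Γ_{V|W}` (base-2 logs, convention
`0 log 0 = 0`), expressed as a supremum over input distributions. -/
noncomputable def capacity {𝒲 𝒱 : Type*} [Fintype 𝒲] [Fintype 𝒱] (Γ : 𝒲 → 𝒱 → ℝ) : ℝ :=
  sSup {r : ℝ | ∃ p : 𝒲 → ℝ, (∀ w, 0 ≤ p w) ∧ (∑ w, p w = 1) ∧
    r = ∑ w, ∑ v, if p w * Γ w v = 0 then 0 else
      p w * Γ w v * Real.logb 2 (Γ w v / (∑ w', p w' * Γ w' v))}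

/-!
Write `S k = V^{min(τ,k)}` for the outputs seen up to time `k`, `L k = 1{k < τ}` and `V̂ k` for
the `k`-th output, replaced by a constant once the process has stopped. Since `S (k+1)`
determines and is determined by `(V̂ k, L k, S k)`, the chain rule gives
`I(S (k+1); X) = I(S k; X) + I(L k; X | S k) + I(V̂ k; X | L k, S k)`.
The flag term is at most `H(L k | min(τ,k)) = H(min(τ,k+1)) - H(min(τ,k))`, because `S k`
determines `min(τ,k)`. In the output term, the Markov chain `V̂ k → W k → (X, L k, S k)` makes
`I(V̂ k; X | W k, L k, S k)` vanish, which leaves `I(V̂ k; W k | L k, S k)`: this is zero where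
`L k = 0`, and on each fibre of `(L k, S k)` inside `{L k = 1}` it is the information carried
by one use of the channel `Γ`, hence at most `C`. Summing up to `k = max τ` telescopes to
`H(τ) + C ∑ₖ P(τ > k) = H(τ) + C E[τ]`.
-/

open Finset

section FiberMass

variable {Ω α β γ : Type*} [Fintype Ω] [DecidableEq α] [DecidableEq β] [DecidableEq γ]
  {μ : Ω → ℝ}

def fiberMass (μ : Ω → ℝ) (f : Ω → α) (a : α) : ℝ :=
  ∑ ω ∈ univ.filter fun ω => f ω = a, μ ω

theorem fiberMass_nonneg (hμ : ∀ ω, 0 ≤ μ ω) (f : Ω → α) (a : α) : 0 ≤ fiberMass μ f a :=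
  sum_nonneg fun ω _ => hμ ω

theorem fiberMass_pos (hμ : ∀ ω, 0 ≤ μ ω) (f : Ω → α) {ω : Ω} (hω : 0 < μ ω) :
    0 < fiberMass μ f (f ω) :=
  hω.trans_le (single_le_sum (fun ω _ => hμ ω) (by simp))

theorem fiberMass_eq_sum_filter {f : Ω → α} {a : α} (P : Ω → Prop) [DecidablePred P]
    (h : ∀ ω, f ω = a ↔ P ω) : fiberMass μ f a = ∑ ω ∈ univ.filter P, μ ω := by
  unfold fiberMass
  congr 1
  ext ω
  simp [h ω]

theorem fiberMass_congr {f : Ω → α} {g : Ω → β} {a : α} {b : β} (h : ∀ ω, f ω = a ↔ g ω = b) :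
    fiberMass μ f a = fiberMass μ g b :=
  fiberMass_eq_sum_filter _ h

theorem fiberMass_mono (hμ : ∀ ω, 0 ≤ μ ω) {f : Ω → α} {g : Ω → β} {a : α} {b : β}
    (h : ∀ ω, f ω = a → g ω = b) : fiberMass μ f a ≤ fiberMass μ g b :=
  sum_le_sum_of_subset_of_nonneg (fun ω => by simpa using h ω) fun ω _ _ => hμ ω

theorem fiberMass_eq_zero {f : Ω → α} {a : α} (h : ∀ ω, f ω ≠ a) : fiberMass μ f a = 0 := by
  rw [fiberMass_eq_sum_filter (fun _ => False) (by simpa using h)]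
  simp

theorem sum_fiberMass_mul (f : Ω → α) {t : Finset α} (ht : ∀ ω, f ω ∈ t) (G : α → ℝ) :
    ∑ a ∈ t, fiberMass μ f a * G a = ∑ ω, μ ω * G (f ω) := by
  rw [← sum_fiberwise_of_maps_to (fun ω _ => ht ω) fun ω => μ ω * G (f ω)]
  refine sum_congr rfl fun a _ => ?_
  rw [fiberMass, sum_mul]
  exact sum_congr rfl fun ω hω => by rw [(mem_filter.1 hω).2]

theorem sum_fiberMass (f : Ω → α) {t : Finset α} (ht : ∀ ω, f ω ∈ t) :
    ∑ a ∈ t, fiberMass μ f a = ∑ ω, μ ω := by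
  simpa using sum_fiberMass_mul (μ := μ) f ht fun _ => 1

/-- Marginalisation over `G`, the fibre `{F = a, G = b}` being `{H = φ b}`. -/
theorem fiberMass_eq_sum {F : Ω → α} {H : Ω → γ} {a : α} (G : Ω → β) {t : Finset β}
    (ht : ∀ ω, G ω ∈ t) (φ : β → γ) (h : ∀ ω b, H ω = φ b ↔ F ω = a ∧ G ω = b) :
    fiberMass μ F a = ∑ b ∈ t, fiberMass μ H (φ b) := by
  rw [fiberMass, ← sum_fiberwise_of_maps_to (g := G) fun ω _ => ht ω]
  refine sum_congr rfl fun b _ => ?_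
  rw [filter_filter, fiberMass_eq_sum_filter _ fun ω => h ω b]

theorem fiberMass_restrict (U : Ω → γ) (u : γ) (f : Ω → α) (a : α) :
    fiberMass (fun ω => if U ω = u then μ ω else 0) f a
      = fiberMass μ (fun ω => (f ω, U ω)) (a, u) := by
  simp only [fiberMass, sum_filter, Prod.mk.injEq]
  exact sum_congr rfl fun ω _ => by split_ifs <;> simp_all

theorem sum_mul_eq_sum_restrict (μ : Ω → ℝ) (U : Ω → γ) (g : Ω → ℝ) :
    ∑ ω, μ ω * g ω = ∑ u ∈ univ.image U, ∑ ω, (if U ω = u then μ ω else 0) * g ω := by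
  rw [sum_comm]
  refine sum_congr rfl fun ω _ => ?_
  simp only [ite_mul, zero_mul]
  rw [sum_ite_eq, if_pos (mem_image_of_mem U (mem_univ ω))]

end FiberMass

section Entropy

variable {Ω α β γ δ : Type*} [Fintype Ω] [DecidableEq α] [DecidableEq β] [DecidableEq γ]
  [DecidableEq δ] {μ : Ω → ℝ}

theorem ent_eq_sum (μ : Ω → ℝ) (f : Ω → α) :
    ent μ f = ∑ ω, μ ω * -Real.logb 2 (fiberMass μ f (f ω)) := by
  rw [← sum_fiberMass_mul f (fun ω => mem_image_of_mem f (mem_univ ω))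
    fun a => -Real.logb 2 (fiberMass μ f a)]
  exact sum_congr rfl fun a _ => by rw [fiberMass, mul_neg]

theorem ent_congr {f : Ω → α} {g : Ω → β} (h : ∀ ω ω', f ω = f ω' ↔ g ω = g ω') :
    ent μ f = ent μ g := by
  simp only [ent_eq_sum, fiberMass_congr fun ω' => h ω' _]

theorem ent_le_ent_pair (hμ : ∀ ω, 0 ≤ μ ω) (f : Ω → α) (g : Ω → β) :
    ent μ g ≤ ent μ fun ω => (f ω, g ω) := by
  rw [ent_eq_sum, ent_eq_sum]
  refine sum_le_sum fun ω _ => ?_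
  rcases (hμ ω).eq_or_lt with hω | hω
  · simp [← hω]
  refine mul_le_mul_of_nonneg_left (neg_le_neg ?_) hω.le
  exact Real.logb_le_logb_of_le one_lt_two (fiberMass_pos hμ _ hω)
    (fiberMass_mono hμ fun ω' h => (Prod.ext_iff.1 h).2)

def cmi (μ : Ω → ℝ) (A : Ω → α) (B : Ω → β) (U : Ω → γ) : ℝ :=
  ent μ (fun ω => (A ω, U ω)) + ent μ (fun ω => (B ω, U ω))
    - ent μ (fun ω => ((A ω, B ω), U ω)) - ent μ U

theorem mi_congr_left {f : Ω → α} {g : Ω → β} (B : Ω → γ)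
    (h : ∀ ω ω', f ω = f ω' ↔ g ω = g ω') : mi μ f B = mi μ g B := by
  rw [mi, mi, ent_congr h, ent_congr (f := fun ω => (f ω, B ω)) (g := fun ω => (g ω, B ω))
    fun ω ω' => by simp only [Prod.mk.injEq, h]]

theorem mi_le_ent (hμ : ∀ ω, 0 ≤ μ ω) (f : Ω → α) (B : Ω → β) : mi μ f B ≤ ent μ f := by
  have := ent_le_ent_pair hμ f B
  rw [mi]
  linarith

theorem mi_chain (A : Ω → α) (U : Ω → γ) (B : Ω → β) :
    mi μ (fun ω => (A ω, U ω)) B = mi μ U B + cmi μ A B U := by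
  have h₁ : ent μ (fun ω => ((A ω, U ω), B ω)) = ent μ (fun ω => ((A ω, B ω), U ω)) :=
    ent_congr fun ω ω' => by simp only [Prod.mk.injEq]; tauto
  have h₂ : ent μ (fun ω => (U ω, B ω)) = ent μ (fun ω => (B ω, U ω)) :=
    ent_congr fun ω ω' => by simp only [Prod.mk.injEq]; tauto
  rw [mi, mi, cmi, h₁, h₂]
  ring

theorem cmi_le_condEnt (hμ : ∀ ω, 0 ≤ μ ω) (A : Ω → α) (B : Ω → β) (U : Ω → γ) :
    cmi μ A B U ≤ ent μ (fun ω => (A ω, U ω)) - ent μ U := by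
  have h := ent_le_ent_pair hμ A fun ω => (B ω, U ω)
  rw [ent_congr (f := fun ω => (A ω, (B ω, U ω))) (g := fun ω => ((A ω, B ω), U ω))
    fun ω ω' => by simp only [Prod.mk.injEq]; tauto] at h
  rw [cmi]
  linarith

def cmiDensity (μ : Ω → ℝ) (A : Ω → α) (B : Ω → β) (U : Ω → γ) (ω : Ω) : ℝ :=
  Real.logb 2 (fiberMass μ (fun ω => ((A ω, B ω), U ω)) ((A ω, B ω), U ω) /
    (fiberMass μ (fun ω => (A ω, U ω)) (A ω, U ω)
      * fiberMass μ (fun ω => (B ω, U ω)) (B ω, U ω) / fiberMass μ U (U ω)))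

theorem cmi_eq_sum (hμ : ∀ ω, 0 ≤ μ ω) (A : Ω → α) (B : Ω → β) (U : Ω → γ) :
    cmi μ A B U = ∑ ω, μ ω * cmiDensity μ A B U ω := by
  simp only [cmi, cmiDensity, ent_eq_sum, ← sum_add_distrib, ← sum_sub_distrib]
  refine sum_congr rfl fun ω _ => ?_
  rcases (hμ ω).eq_or_lt with hω | hω
  · simp [← hω]
  have hABU := fiberMass_pos hμ (fun ω => ((A ω, B ω), U ω)) hω
  have hAU := fiberMass_pos hμ (fun ω => (A ω, U ω)) hω
  have hBU := fiberMass_pos hμ (fun ω => (B ω, U ω)) hω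
  have hU := fiberMass_pos hμ U hω
  rw [Real.logb_div hABU.ne' (by positivity), Real.logb_div (by positivity) hU.ne',
    Real.logb_mul hAU.ne' hBU.ne']
  ring

theorem cmiDensity_eq (hμ : ∀ ω, 0 ≤ μ ω) {A : Ω → α} {B : Ω → β} {U : Ω → γ} {ω : Ω}
    (hω : 0 < μ ω) {c : ℝ} (h : fiberMass μ (fun ω => ((A ω, B ω), U ω)) ((A ω, B ω), U ω)
      = c * fiberMass μ (fun ω => (B ω, U ω)) (B ω, U ω)) :
    cmiDensity μ A B U ω
      = Real.logb 2 (c * fiberMass μ U (U ω) / fiberMass μ (fun ω => (A ω, U ω)) (A ω, U ω)) := by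
  have hBU := fiberMass_pos hμ (fun ω => (B ω, U ω)) hω
  have hU := fiberMass_pos hμ U hω
  have hAU := fiberMass_pos hμ (fun ω => (A ω, U ω)) hω
  rw [cmiDensity, h]
  congr 1
  field_simp

theorem cmiDensity_eq_zero (hμ : ∀ ω, 0 ≤ μ ω) {A : Ω → α} {B : Ω → β} {U : Ω → γ} {ω : Ω}
    (hω : 0 < μ ω) {c : ℝ} (h : fiberMass μ (fun ω => ((A ω, B ω), U ω)) ((A ω, B ω), U ω)
      = c * fiberMass μ (fun ω => (B ω, U ω)) (B ω, U ω))
    (hA : fiberMass μ (fun ω => (A ω, U ω)) (A ω, U ω) = c * fiberMass μ U (U ω)) :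
    cmiDensity μ A B U ω = 0 := by
  rw [cmiDensity_eq hμ hω h, ← hA, div_self (fiberMass_pos hμ _ hω).ne', Real.logb_one]

/-- Gibbs' inequality, against a sub-probability weight `Q`. -/
theorem sum_mul_logb_div_nonneg (hμ : ∀ ω, 0 ≤ μ ω) (T : Ω → α) (Q : α → ℝ)
    (hQ0 : ∀ a, 0 ≤ Q a) (hQ : ∀ ω, 0 < μ ω → 0 < Q (T ω))
    (hsum : ∑ a ∈ univ.image T, Q a ≤ ∑ ω, μ ω) :
    0 ≤ ∑ ω, μ ω * Real.logb 2 (fiberMass μ T (T ω) / Q (T ω)) := by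
  have hterm : ∀ ω, μ ω - μ ω * (Q (T ω) / fiberMass μ T (T ω))
      ≤ μ ω * Real.log (fiberMass μ T (T ω) / Q (T ω)) := by
    intro ω
    rcases (hμ ω).eq_or_lt with hω | hω
    · simp [← hω]
    have h := Real.one_sub_inv_le_log_of_pos (div_pos (fiberMass_pos hμ T hω) (hQ ω hω))
    rw [inv_div] at h
    linarith [mul_le_mul_of_nonneg_left h hω.le]
  have hQsum : ∑ ω, μ ω * (Q (T ω) / fiberMass μ T (T ω)) ≤ ∑ ω, μ ω := by
    rw [← sum_fiberMass_mul T (fun ω => mem_image_of_mem T (mem_univ ω))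
      fun a => Q a / fiberMass μ T a]
    refine (sum_le_sum fun a _ => ?_).trans hsum
    rcases (fiberMass_nonneg hμ T a).eq_or_lt with h | h
    · simp [← h, hQ0]
    · rw [mul_div_cancel₀ _ h.ne']
  simp only [Real.logb, mul_div_assoc', ← sum_div]
  refine div_nonneg ?_ (Real.log_nonneg one_le_two)
  linarith [sum_le_sum fun ω (_ : ω ∈ univ) => hterm ω, sum_sub_distrib (s := univ)
    (f := μ) (g := fun ω => μ ω * (Q (T ω) / fiberMass μ T (T ω)))]

theorem sum_condProduct_le (hμ : ∀ ω, 0 ≤ μ ω) (A : Ω → α) (B : Ω → β) (U : Ω → γ) :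
    ∑ t ∈ univ.image (fun ω => ((A ω, B ω), U ω)),
      fiberMass μ (fun ω => (A ω, U ω)) (t.1.1, t.2)
        * fiberMass μ (fun ω => (B ω, U ω)) (t.1.2, t.2) / fiberMass μ U t.2
      ≤ ∑ ω, μ ω := by
  have hmarg : ∀ u, ∑ a ∈ univ.image A, fiberMass μ (fun ω => (A ω, U ω)) (a, u)
      = fiberMass μ U u := fun u =>
    (fiberMass_eq_sum A (fun ω => mem_image_of_mem A (mem_univ ω)) (fun a => (a, u))
      fun ω a => by simp only [Prod.mk.injEq]; tauto).symm
  calc _ ≤ ∑ t ∈ (univ.image A ×ˢ univ.image B) ×ˢ univ.image U,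
        fiberMass μ (fun ω => (A ω, U ω)) (t.1.1, t.2)
          * fiberMass μ (fun ω => (B ω, U ω)) (t.1.2, t.2) / fiberMass μ U t.2 := by
        refine sum_le_sum_of_subset_of_nonneg ?_ fun t _ _ => div_nonneg
          (mul_nonneg (fiberMass_nonneg hμ _ _) (fiberMass_nonneg hμ _ _)) (fiberMass_nonneg hμ _ _)
        intro t ht
        obtain ⟨ω, -, rfl⟩ := mem_image.1 ht
        simp
    _ = ∑ t ∈ univ.image B ×ˢ univ.image U, fiberMass μ (fun ω => (B ω, U ω)) t
          * (fiberMass μ U t.2 / fiberMass μ U t.2) := by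
        rw [sum_product, sum_product, sum_product, sum_comm]
        refine sum_congr rfl fun b _ => ?_
        rw [sum_comm]
        refine sum_congr rfl fun u _ => ?_
        dsimp only
        rw [← sum_div, ← sum_mul, hmarg u]
        ring
    _ ≤ ∑ t ∈ univ.image B ×ˢ univ.image U, fiberMass μ (fun ω => (B ω, U ω)) t :=
        sum_le_sum fun t _ =>
          mul_le_of_le_one_right (fiberMass_nonneg hμ _ _) (div_self_le_one _)
    _ = ∑ ω, μ ω := sum_fiberMass _ fun ω => by simp

theorem cmi_nonneg (hμ : ∀ ω, 0 ≤ μ ω) (A : Ω → α) (B : Ω → β) (U : Ω → γ) :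
    0 ≤ cmi μ A B U := by
  rw [cmi_eq_sum hμ]
  refine sum_mul_logb_div_nonneg hμ (fun ω => ((A ω, B ω), U ω))
    (fun t => fiberMass μ (fun ω => (A ω, U ω)) (t.1.1, t.2)
      * fiberMass μ (fun ω => (B ω, U ω)) (t.1.2, t.2) / fiberMass μ U t.2)
    (fun t => div_nonneg (mul_nonneg (fiberMass_nonneg hμ _ _) (fiberMass_nonneg hμ _ _))
      (fiberMass_nonneg hμ _ _)) (fun ω hω => ?_)
    (sum_condProduct_le hμ A B U)
  have := fiberMass_pos hμ (fun ω => (A ω, U ω)) hω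
  have := fiberMass_pos hμ (fun ω => (B ω, U ω)) hω
  have := fiberMass_pos hμ U hω
  positivity

theorem condEnt_le_condEnt_comp (hμ : ∀ ω, 0 ≤ μ ω) (A : Ω → α) (U : Ω → γ) (g : γ → δ) :
    ent μ (fun ω => (A ω, U ω)) - ent μ U
      ≤ ent μ (fun ω => (A ω, g (U ω))) - ent μ (fun ω => g (U ω)) := by
  have h := cmi_nonneg hμ A U fun ω => g (U ω)
  have h₁ : ent μ (fun ω => (U ω, g (U ω))) = ent μ U :=
    ent_congr fun ω ω' => by simp only [Prod.mk.injEq]; constructor <;> simp_all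
  have h₂ : ent μ (fun ω => ((A ω, U ω), g (U ω))) = ent μ (fun ω => (A ω, U ω)) :=
    ent_congr fun ω ω' => by simp only [Prod.mk.injEq]; constructor <;> simp_all
  rw [cmi, h₁, h₂] at h
  linarith

theorem cmi_le_cmi_add_cmi (hμ : ∀ ω, 0 ≤ μ ω) (A : Ω → α) (B : Ω → β) (W : Ω → δ)
    (U : Ω → γ) : cmi μ A B U ≤ cmi μ A W U + cmi μ A B fun ω => (W ω, U ω) := by
  have h := cmi_nonneg hμ A W fun ω => (B ω, U ω)
  have h₁ : ent μ (fun ω => (A ω, (B ω, U ω))) = ent μ (fun ω => ((A ω, B ω), U ω)) :=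
    ent_congr fun ω ω' => by simp only [Prod.mk.injEq]; tauto
  have h₂ : ent μ (fun ω => (W ω, (B ω, U ω))) = ent μ (fun ω => (B ω, (W ω, U ω))) :=
    ent_congr fun ω ω' => by simp only [Prod.mk.injEq]; tauto
  have h₃ : ent μ (fun ω => ((A ω, W ω), (B ω, U ω)))
      = ent μ (fun ω => ((A ω, B ω), (W ω, U ω))) :=
    ent_congr fun ω ω' => by simp only [Prod.mk.injEq]; tauto
  have h₄ : ent μ (fun ω => ((A ω, W ω), U ω)) = ent μ (fun ω => (A ω, (W ω, U ω))) :=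
    ent_congr fun ω ω' => by simp only [Prod.mk.injEq]; tauto
  rw [cmi, h₁, h₂, h₃] at h
  rw [cmi, cmi, cmi, h₄]
  linarith

theorem sum_restrict_mul_cmiDensity_eq_zero (hμ : ∀ ω, 0 ≤ μ ω) {A : Ω → α} (B : Ω → β)
    {U : Ω → γ} {u : γ} (hA : ∀ ω ω', U ω = u → U ω' = u → A ω = A ω') :
    ∑ ω, (if U ω = u then μ ω else 0) * cmiDensity μ A B U ω = 0 := by
  refine sum_eq_zero fun ω _ => ?_
  by_cases hUω : U ω = u
  swap
  · simp [hUω]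
  rcases (hμ ω).eq_or_lt with hω | hω
  · simp [← hω]
  have hA' : ∀ ω', U ω' = U ω → A ω' = A ω := fun ω' h => hA ω' ω (h.trans hUω) hUω
  rw [cmiDensity_eq_zero hμ hω (c := 1), mul_zero]
  · rw [one_mul]
    exact fiberMass_congr fun ω' => by
      simp only [Prod.mk.injEq]
      exact ⟨fun h => ⟨h.1.2, h.2⟩, fun h => ⟨⟨hA' ω' h.2, h.1⟩, h.2⟩⟩
  · rw [one_mul]
    exact fiberMass_congr fun ω' => by
      simp only [Prod.mk.injEq]
      exact ⟨fun h => h.2, fun h => ⟨hA' ω' h, h⟩⟩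

variable {A : Ω → α} {B : Ω → β} {U : Ω → γ}

theorem fiberMass_eq_mul_of_kernel (κ : γ → α → ℝ)
    (hκ : ∀ a b u, fiberMass μ (fun ω => ((A ω, B ω), U ω)) ((a, b), u)
      = κ u a * fiberMass μ (fun ω => (B ω, U ω)) (b, u)) (a : α) (u : γ) :
    fiberMass μ (fun ω => (A ω, U ω)) (a, u) = κ u a * fiberMass μ U u := by
  rw [fiberMass_eq_sum (H := fun ω => ((A ω, B ω), U ω)) B
      (fun ω => mem_image_of_mem B (mem_univ ω)) (fun b => ((a, b), u))
      fun ω b => by simp only [Prod.mk.injEq]; tauto,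
    fiberMass_eq_sum (H := fun ω => (B ω, U ω)) B (fun ω => mem_image_of_mem B (mem_univ ω))
      (fun b => (b, u))
      fun ω b => by simp only [Prod.mk.injEq]; tauto,
    mul_sum]
  exact sum_congr rfl fun b _ => hκ a b u

theorem cmi_eq_zero_of_kernel (hμ : ∀ ω, 0 ≤ μ ω) (κ : γ → α → ℝ)
    (hκ : ∀ a b u, fiberMass μ (fun ω => ((A ω, B ω), U ω)) ((a, b), u)
      = κ u a * fiberMass μ (fun ω => (B ω, U ω)) (b, u)) :
    cmi μ A B U = 0 := by
  rw [cmi_eq_sum hμ]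
  refine sum_eq_zero fun ω _ => ?_
  rcases (hμ ω).eq_or_lt with hω | hω
  · simp [← hω]
  rw [cmiDensity_eq_zero hμ hω (hκ _ _ _) (fiberMass_eq_mul_of_kernel κ hκ _ _), mul_zero]

end Entropy

section Capacity

variable {𝒲 𝒱 : Type*} [Fintype 𝒲] [Fintype 𝒱] {Γ : 𝒲 → 𝒱 → ℝ}

def channelInfo (Γ : 𝒲 → 𝒱 → ℝ) (p : 𝒲 → ℝ) : ℝ :=
  ∑ w, ∑ v, if p w * Γ w v = 0 then 0 else
    p w * Γ w v * Real.logb 2 (Γ w v / (∑ w', p w' * Γ w' v))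

theorem channelInfo_le (hΓ0 : ∀ w v, 0 ≤ Γ w v) {p : 𝒲 → ℝ} (hp0 : ∀ w, 0 ≤ p w) :
    channelInfo Γ p ≤ (∑ w, ∑ v, Γ w v) / Real.log 2 := by
  simp only [channelInfo, sum_div]
  refine sum_le_sum fun w _ => sum_le_sum fun v _ => ?_
  have hlog2 : 0 < Real.log 2 := Real.log_pos one_lt_two
  split_ifs with h
  · exact div_nonneg (hΓ0 w v) hlog2.le
  have hx : 0 < p w * Γ w v := lt_of_le_of_ne (mul_nonneg (hp0 w) (hΓ0 w v)) (Ne.symm h)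
  have hS : p w * Γ w v ≤ ∑ w', p w' * Γ w' v :=
    single_le_sum (fun w' _ => mul_nonneg (hp0 w') (hΓ0 w' v)) (mem_univ w)
  have hS0 := hx.trans_le hS
  calc p w * Γ w v * Real.logb 2 (Γ w v / ∑ w', p w' * Γ w' v)
      ≤ p w * Γ w v * ((Γ w v / ∑ w', p w' * Γ w' v) / Real.log 2) := by
        refine mul_le_mul_of_nonneg_left (div_le_div_of_nonneg_right ?_ hlog2.le) hx.le
        have hΓ := lt_of_le_of_ne (hΓ0 w v) (right_ne_zero_of_mul h).symm
        linarith [Real.log_le_sub_one_of_pos (div_pos hΓ hS0)]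
    _ = Γ w v * (p w * Γ w v / ∑ w', p w' * Γ w' v) / Real.log 2 := by ring
    _ ≤ Γ w v / Real.log 2 := by
        gcongr
        exact mul_le_of_le_one_right (hΓ0 w v) ((div_le_one hS0).2 hS)

theorem channelInfo_le_capacity (hΓ0 : ∀ w v, 0 ≤ Γ w v) {p : 𝒲 → ℝ} (hp0 : ∀ w, 0 ≤ p w)
    (hp1 : ∑ w, p w = 1) : channelInfo Γ p ≤ capacity Γ :=
  le_csSup ⟨(∑ w, ∑ v, Γ w v) / Real.log 2, by
    rintro r ⟨q, hq0, -, rfl⟩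
    exact channelInfo_le hΓ0 hq0⟩ ⟨p, hp0, hp1, rfl⟩

variable {Ω γ : Type*} [Fintype Ω] [DecidableEq γ] [DecidableEq 𝒲] [DecidableEq 𝒱] {μ : Ω → ℝ}

theorem sum_mul_logb_le_capacity {ν : Ω → ℝ} (hν : ∀ ω, 0 ≤ ν ω) (hΓ0 : ∀ w v, 0 ≤ Γ w v)
    (A : Ω → 𝒱) (W : Ω → 𝒲)
    (h : ∀ a w, fiberMass ν (fun ω => (A ω, W ω)) (a, w) = Γ w a * fiberMass ν W w) :
    ∑ ω, ν ω * Real.logb 2 (Γ (W ω) (A ω) * (∑ ω, ν ω) / fiberMass ν A (A ω))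
      ≤ capacity Γ * ∑ ω, ν ω := by
  set m := ∑ ω, ν ω with hm_def
  rcases (sum_nonneg fun ω (_ : ω ∈ univ) => hν ω).eq_or_lt with hm | hm
  · have h0 := (sum_eq_zero_iff_of_nonneg fun ω (_ : ω ∈ univ) => hν ω).1 hm.symm
    simp [h0, hm_def]
  have hA : ∀ a, fiberMass ν A a = ∑ w, Γ w a * fiberMass ν W w := fun a => by
    rw [fiberMass_eq_sum (F := A) (H := fun ω => (A ω, W ω)) W (fun ω => mem_univ _)
      (fun w => (a, w)) fun ω w => Prod.ext_iff]
    exact sum_congr rfl fun w _ => h a w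
  have hW : ∑ w, fiberMass ν W w / m = 1 := by
    rw [← sum_div, sum_fiberMass W fun ω => mem_univ _, div_self hm.ne']
  have hS : ∀ a, ∑ w, fiberMass ν W w / m * Γ w a = fiberMass ν A a / m := fun a => by
    rw [hA, sum_div]
    exact sum_congr rfl fun w _ => by ring
  have hsum : ∑ t : 𝒱 × 𝒲, fiberMass ν (fun ω => (A ω, W ω)) t
      * Real.logb 2 (Γ t.2 t.1 * m / fiberMass ν A t.1)
      = m * channelInfo Γ fun w => fiberMass ν W w / m := by
    rw [channelInfo, mul_sum, Fintype.sum_prod_type, sum_comm]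
    refine sum_congr rfl fun w _ => ?_
    rw [mul_sum]
    refine sum_congr rfl fun a _ => ?_
    rw [h, hS]
    split_ifs with hc
    · rcases mul_eq_zero.1 hc with hc | hc
      · simp [(div_eq_zero_iff.1 hc).resolve_right hm.ne']
      · simp [hc]
    · have hm0 : m ≠ 0 := hm.ne'
      rw [div_div_eq_mul_div]
      field_simp
  rw [← sum_fiberMass_mul (fun ω => (A ω, W ω)) (fun ω => mem_univ _)
    fun t => Real.logb 2 (Γ t.2 t.1 * m / fiberMass ν A t.1), hsum, mul_comm (capacity Γ)]
  exact mul_le_mul_of_nonneg_left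
    (channelInfo_le_capacity hΓ0 (fun w => div_nonneg (fiberMass_nonneg hν W w) hm.le) hW) hm.le

theorem sum_restrict_mul_cmiDensity_le (hμ : ∀ ω, 0 ≤ μ ω) (hΓ0 : ∀ w v, 0 ≤ Γ w v)
    (A : Ω → 𝒱) (W : Ω → 𝒲) (U : Ω → γ) (u : γ)
    (hΓ : ∀ a w, fiberMass μ (fun ω => (A ω, (W ω, U ω))) (a, (w, u))
      = Γ w a * fiberMass μ (fun ω => (W ω, U ω)) (w, u)) :
    ∑ ω, (if U ω = u then μ ω else 0) * cmiDensity μ A W U ω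
      ≤ capacity Γ * fiberMass μ U u := by
  set ν : Ω → ℝ := fun ω => if U ω = u then μ ω else 0
  have hν : ∀ ω, 0 ≤ ν ω := fun ω => by dsimp only [ν]; split_ifs <;> simp [hμ ω]
  have hmass : ∑ ω, ν ω = fiberMass μ U u := by rw [fiberMass, sum_filter]
  have hΓ' : ∀ a w, fiberMass μ (fun ω => ((A ω, W ω), U ω)) ((a, w), u)
      = Γ w a * fiberMass μ (fun ω => (W ω, U ω)) (w, u) := fun a w => by
    rw [← hΓ]
    exact fiberMass_congr fun ω' => by simp only [Prod.mk.injEq]; tauto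
  have hterm : ∀ ω, ν ω * cmiDensity μ A W U ω
      = ν ω * Real.logb 2 (Γ (W ω) (A ω) * (∑ ω, ν ω) / fiberMass ν A (A ω)) := by
    intro ω
    by_cases hUω : U ω = u
    swap
    · simp [ν, hUω]
    rcases (hμ ω).eq_or_lt with hω | hω
    · simp [ν, ← hω]
    rw [cmiDensity_eq hμ hω (hUω ▸ hΓ' _ _), hmass, fiberMass_restrict, hUω]
  rw [sum_congr rfl fun ω _ => hterm ω, ← hmass]
  refine sum_mul_logb_le_capacity hν hΓ0 A W fun a w => ?_
  rw [fiberMass_restrict, fiberMass_restrict, hΓ']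

theorem cmi_le_capacity (hμ : ∀ ω, 0 ≤ μ ω) (hΓ0 : ∀ w v, 0 ≤ Γ w v) (A : Ω → 𝒱) (W : Ω → 𝒲)
    (U : Ω → γ) (E : γ → Prop) [DecidablePred E]
    (hA : ∀ ω ω', U ω = U ω' → ¬E (U ω) → A ω = A ω')
    (hΓ : ∀ a w u, E u → fiberMass μ (fun ω => (A ω, (W ω, U ω))) (a, (w, u))
      = Γ w a * fiberMass μ (fun ω => (W ω, U ω)) (w, u)) :
    cmi μ A W U ≤ capacity Γ * ∑ ω ∈ univ.filter fun ω => E (U ω), μ ω := by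
  have hrhs : ∑ ω ∈ univ.filter (fun ω => E (U ω)), μ ω
      = ∑ u ∈ univ.image U, fiberMass μ U u * if E u then 1 else 0 := by
    rw [sum_fiberMass_mul U (fun ω => mem_image_of_mem U (mem_univ ω)), sum_filter]
    simp
  rw [cmi_eq_sum hμ, sum_mul_eq_sum_restrict μ U, hrhs, mul_sum]
  refine sum_le_sum fun u _ => ?_
  split_ifs with hu
  · rw [mul_one]
    exact sum_restrict_mul_cmiDensity_le hμ hΓ0 A W U u fun a w => hΓ a w u hu
  · rw [mul_zero, mul_zero]
    exact (sum_restrict_mul_cmiDensity_eq_zero hμ W fun ω ω' hω hω' =>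
      hA ω ω' (hω.trans hω'.symm) (hω ▸ hu)).le

end Capacity

section Outputs

variable {Ω 𝒱 : Type*} (τ : Ω → ℕ) (V : ℕ → Ω → 𝒱)

/-- `S k = V^{min(τ,k)}`. -/
def truncOutputs (k : ℕ) (ω : Ω) : List 𝒱 :=
  (List.range (min (τ ω) k)).map fun i => V i ω

/-- `V̂ k`: the output at time `k`, or `v₀` once the process has stopped. -/
def paddedOutput (v₀ : 𝒱) (k : ℕ) (ω : Ω) : 𝒱 :=
  if k < τ ω then V k ω else v₀

variable {τ V}

theorem paddedOutput_of_lt (v₀ : 𝒱) {k : ℕ} {ω : Ω} (hk : k < τ ω) :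
    paddedOutput τ V v₀ k ω = V k ω :=
  if_pos hk

theorem paddedOutput_of_not_lt (v₀ : 𝒱) {k : ℕ} {ω : Ω} (hk : ¬k < τ ω) :
    paddedOutput τ V v₀ k ω = v₀ :=
  if_neg hk

theorem length_truncOutputs (k : ℕ) (ω : Ω) : (truncOutputs τ V k ω).length = min (τ ω) k := by
  simp [truncOutputs]

theorem truncOutputs_succ (k : ℕ) (ω : Ω) :
    truncOutputs τ V (k + 1) ω
      = if k < τ ω then truncOutputs τ V k ω ++ [V k ω] else truncOutputs τ V k ω := by
  unfold truncOutputs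
  split_ifs with hk
  · rw [min_eq_right hk, min_eq_right hk.le, List.range_succ, List.map_append]
    rfl
  · rw [min_eq_left (by omega), min_eq_left (by omega)]

theorem truncOutputs_eq_take (k : ℕ) (ω : Ω) :
    truncOutputs τ V k ω = (truncOutputs τ V (k + 1) ω).take k := by
  rw [truncOutputs_succ]
  split_ifs with hk
  · rw [List.take_append_of_le_length (by simp [length_truncOutputs]; omega),
      List.take_of_length_le (by simp [length_truncOutputs])]
  · rw [List.take_of_length_le (by simp [length_truncOutputs])]

theorem paddedOutput_eq_getD (v₀ : 𝒱) (k : ℕ) (ω : Ω) :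
    paddedOutput τ V v₀ k ω = (truncOutputs τ V (k + 1) ω).getD k v₀ := by
  rw [paddedOutput, truncOutputs_succ]
  split_ifs with hk
  · simp [List.getD_eq_getElem?_getD, length_truncOutputs, min_eq_right hk.le]
  · simp [List.getD_eq_getElem?_getD, length_truncOutputs]

theorem truncOutputs_succ_eq_iff (v₀ : 𝒱) (k : ℕ) (ω ω' : Ω) :
    truncOutputs τ V (k + 1) ω = truncOutputs τ V (k + 1) ω' ↔
      (paddedOutput τ V v₀ k ω, (decide (k < τ ω), truncOutputs τ V k ω))
        = (paddedOutput τ V v₀ k ω', (decide (k < τ ω'), truncOutputs τ V k ω')) := by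
  have hlt : ∀ ω, k < τ ω ↔ k < (truncOutputs τ V (k + 1) ω).length := fun ω => by
    rw [length_truncOutputs]; omega
  constructor
  · intro h
    simp only [hlt, paddedOutput_eq_getD v₀ k, truncOutputs_eq_take (k := k), h]
  · simp only [Prod.mk.injEq, decide_eq_decide]
    rintro ⟨hV, hk, hT⟩
    rw [truncOutputs_succ, truncOutputs_succ, hT]
    by_cases h : k < τ ω
    · rw [paddedOutput, paddedOutput, if_pos h, if_pos (hk.1 h)] at hV
      rw [if_pos h, if_pos (hk.1 h), hV]
    · rw [if_neg h, if_neg (mt hk.2 h)]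

theorem truncOutputs_eq_iff (v₀ : 𝒱) {k : ℕ} {ω : Ω} (hk : k < τ ω) {s : List 𝒱}
    (hs : s.length = k) : truncOutputs τ V k ω = s ↔ ∀ j : Fin k, V j ω = s.getD j v₀ := by
  rw [List.ext_getElem_iff]
  simp [min_eq_right hk.le, hs, truncOutputs, List.getD_eq_getElem?_getD]
  exact ⟨fun h j => h j j.2, fun h i hi => h ⟨i, hi⟩⟩

end Outputs

section VariableLengthBound

variable {Ω 𝒳 𝒲 𝒱 : Type*} [Fintype Ω] [DecidableEq 𝒳] [DecidableEq 𝒲] [DecidableEq 𝒱]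
  {μ : Ω → ℝ} {τ : Ω → ℕ} {X : Ω → 𝒳} {W : ℕ → Ω → 𝒲} {V : ℕ → Ω → 𝒱} {Γ : 𝒲 → 𝒱 → ℝ}

/-- Times start at `0`: `V i` is the paper's `V_{i+1}`, `i < τ` is `L_{i+1} = 1`, and `vp` is a
value of `V^i`. -/
def HasChannelLaw (μ : Ω → ℝ) (τ : Ω → ℕ) (X : Ω → 𝒳) (W : ℕ → Ω → 𝒲) (V : ℕ → Ω → 𝒱)
    (Γ : 𝒲 → 𝒱 → ℝ) : Prop :=
  ∀ (i : ℕ) (w : 𝒲) (v : 𝒱) (vp : Fin i → 𝒱) (x : 𝒳),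
    ∑ ω ∈ Finset.univ.filter (fun ω =>
        V i ω = v ∧ W i ω = w ∧ (∀ j : Fin i, V j ω = vp j) ∧ X ω = x ∧ i < τ ω), μ ω
      = Γ w v * ∑ ω ∈ Finset.univ.filter (fun ω =>
          W i ω = w ∧ (∀ j : Fin i, V j ω = vp j) ∧ X ω = x ∧ i < τ ω), μ ω

theorem fiberMass_paddedOutput_eq (hchan : HasChannelLaw μ τ X W V Γ) (v₀ : 𝒱) (k : ℕ)
    (a : 𝒱) (x : 𝒳) (w : 𝒲) (u : Bool × List 𝒱) :
    fiberMass μ (fun ω => ((paddedOutput τ V v₀ k ω, X ω),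
        (W k ω, (decide (k < τ ω), truncOutputs τ V k ω)))) ((a, x), (w, u))
      = (if u.1 then Γ w a else if a = v₀ then 1 else 0)
        * fiberMass μ (fun ω => (X ω, (W k ω, (decide (k < τ ω), truncOutputs τ V k ω))))
          (x, (w, u)) := by
  obtain ⟨_ | _, s⟩ := u
  · simp only [Bool.false_eq_true, if_false]
    split_ifs with ha
    · rw [one_mul, ha]
      exact fiberMass_congr fun ω => by
        by_cases hk : k < τ ω <;> simp [hk, paddedOutput_of_not_lt]
    · rw [zero_mul]
      exact fiberMass_eq_zero fun ω => by
        by_cases hk : k < τ ω <;> simp [hk, paddedOutput_of_not_lt, Ne.symm ha]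
  simp only [if_true]
  by_cases hs : s.length = k
  · have hP : ∀ ω, k < τ ω → (truncOutputs τ V k ω = s ↔ ∀ j : Fin k, V j ω = s.getD j v₀) :=
      fun ω hk => truncOutputs_eq_iff v₀ hk hs
    rw [fiberMass_eq_sum_filter (fun ω => V k ω = a ∧ W k ω = w
        ∧ (∀ j : Fin k, V j ω = s.getD j v₀) ∧ X ω = x ∧ k < τ ω) fun ω => ?_,
      fiberMass_eq_sum_filter (fun ω => W k ω = w
        ∧ (∀ j : Fin k, V j ω = s.getD j v₀) ∧ X ω = x ∧ k < τ ω) fun ω => ?_]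
    · exact hchan k w a _ x
    · by_cases hk : k < τ ω
      · simp only [Prod.mk.injEq, decide_eq_true_eq, hP ω hk, hk, and_true]
        tauto
      · simp [hk]
    · by_cases hk : k < τ ω
      · simp only [Prod.mk.injEq, decide_eq_true_eq, paddedOutput_of_lt v₀ hk, hP ω hk, hk,
          and_true]
        tauto
      · simp [hk]
  · have hne : ∀ ω, k < τ ω → truncOutputs τ V k ω ≠ s := fun ω hk h => hs (by
      rw [← h, length_truncOutputs, min_eq_right hk.le])
    rw [fiberMass_eq_zero, fiberMass_eq_zero, mul_zero]
    · intro ω h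
      simp only [Prod.mk.injEq, decide_eq_true_eq] at h
      exact hne ω h.2.2.1 h.2.2.2
    · intro ω h
      simp only [Prod.mk.injEq, decide_eq_true_eq] at h
      exact hne ω h.2.2.1 h.2.2.2

theorem cmi_flag_le (hμ : ∀ ω, 0 ≤ μ ω) (k : ℕ) :
    cmi μ (fun ω => decide (k < τ ω)) X (truncOutputs τ V k)
      ≤ ent μ (fun ω => min (τ ω) (k + 1)) - ent μ (fun ω => min (τ ω) k) := by
  calc _ ≤ ent μ (fun ω => (decide (k < τ ω), truncOutputs τ V k ω))
        - ent μ (truncOutputs τ V k) := cmi_le_condEnt hμ _ _ _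
    _ ≤ ent μ (fun ω => (decide (k < τ ω), (truncOutputs τ V k ω).length))
        - ent μ (fun ω => (truncOutputs τ V k ω).length) :=
        condEnt_le_condEnt_comp hμ _ _ List.length
    _ = _ := by
        simp only [length_truncOutputs]
        rw [ent_congr (g := fun ω => min (τ ω) (k + 1)) fun ω ω' => by
          simp only [Prod.mk.injEq, decide_eq_decide]
          omega]

variable [Fintype 𝒲] [Fintype 𝒱]

theorem cmi_paddedOutput_le (hμ : ∀ ω, 0 ≤ μ ω) (hΓ0 : ∀ w v, 0 ≤ Γ w v)
    (hchan : HasChannelLaw μ τ X W V Γ) (v₀ : 𝒱) (k : ℕ) :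
    cmi μ (paddedOutput τ V v₀ k) X (fun ω => (decide (k < τ ω), truncOutputs τ V k ω))
      ≤ capacity Γ * ∑ ω ∈ univ.filter fun ω => k < τ ω, μ ω := by
  have hκ := fiberMass_paddedOutput_eq hchan v₀ k
  set U := fun ω => (decide (k < τ ω), truncOutputs τ V k ω)
  calc _ ≤ cmi μ (paddedOutput τ V v₀ k) (W k) U
        + cmi μ (paddedOutput τ V v₀ k) X fun ω => (W k ω, U ω) :=
        cmi_le_cmi_add_cmi hμ _ _ _ _
    _ = cmi μ (paddedOutput τ V v₀ k) (W k) U := by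
        rw [cmi_eq_zero_of_kernel hμ _ fun a x p => hκ a x p.1 p.2, add_zero]
    _ ≤ capacity Γ * ∑ ω ∈ univ.filter fun ω => (U ω).1 = true, μ ω := by
        refine cmi_le_capacity hμ hΓ0 _ _ U (fun u => u.1 = true) (fun ω ω' h hω => ?_)
          fun a w u hu => ?_
        · simp only [U, Prod.mk.injEq, decide_eq_decide, decide_eq_true_eq] at h hω
          rw [paddedOutput_of_not_lt v₀ hω, paddedOutput_of_not_lt v₀ (mt h.1.2 hω)]
        · rw [fiberMass_eq_mul_of_kernel _ (fun a x p => hκ a x p.1 p.2) a (w, u), hu,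
            if_pos rfl]
    _ = capacity Γ * ∑ ω ∈ univ.filter fun ω => k < τ ω, μ ω := by simp [U]

theorem mi_truncOutputs_succ_le (hμ : ∀ ω, 0 ≤ μ ω) (hΓ0 : ∀ w v, 0 ≤ Γ w v)
    (hchan : HasChannelLaw μ τ X W V Γ) (v₀ : 𝒱) (k : ℕ) :
    mi μ (truncOutputs τ V (k + 1)) X
      ≤ mi μ (truncOutputs τ V k) X
        + (ent μ (fun ω => min (τ ω) (k + 1)) - ent μ (fun ω => min (τ ω) k))
        + capacity Γ * ∑ ω ∈ univ.filter fun ω => k < τ ω, μ ω := by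
  rw [mi_congr_left X (truncOutputs_succ_eq_iff v₀ k),
    mi_chain (paddedOutput τ V v₀ k) (fun ω => (decide (k < τ ω), truncOutputs τ V k ω)),
    mi_chain (fun ω => decide (k < τ ω)) (truncOutputs τ V k)]
  linarith [cmi_flag_le (τ := τ) (X := X) (V := V) hμ k, cmi_paddedOutput_le hμ hΓ0 hchan v₀ k]

theorem mi_truncOutputs_le (hμ : ∀ ω, 0 ≤ μ ω) (hΓ0 : ∀ w v, 0 ≤ Γ w v)
    (hchan : HasChannelLaw μ τ X W V Γ) (v₀ : 𝒱) (k : ℕ) :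
    mi μ (truncOutputs τ V k) X
      ≤ ent μ (fun ω => min (τ ω) k) + capacity Γ * ∑ ω, μ ω * (min (τ ω) k : ℕ) := by
  induction k with
  | zero =>
    calc _ ≤ ent μ (truncOutputs τ V 0) := mi_le_ent hμ _ _
      _ = ent μ (fun ω => min (τ ω) 0) := ent_congr fun ω ω' => by simp [truncOutputs]
      _ = _ := by simp
  | succ k ih =>
    have hE : ∑ ω, μ ω * ((min (τ ω) (k + 1) : ℕ) : ℝ)
        = ∑ ω, μ ω * (min (τ ω) k : ℕ) + ∑ ω ∈ univ.filter fun ω => k < τ ω, μ ω := by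
      rw [sum_filter, ← sum_add_distrib]
      refine sum_congr rfl fun ω _ => ?_
      split_ifs with hk
      · rw [min_eq_right hk, min_eq_right hk.le]
        push_cast
        ring
      · rw [min_eq_left (by omega), min_eq_left (by omega), add_zero]
    rw [hE, mul_add]
    linarith [mi_truncOutputs_succ_le hμ hΓ0 hchan v₀ k]

end VariableLengthBound

theorem stmt12_general {Ω 𝒳v 𝒲 𝒱 : Type*} [Fintype Ω] [Fintype 𝒲] [Fintype 𝒱]
    [DecidableEq 𝒳v] [DecidableEq 𝒲] [DecidableEq 𝒱]
    (μ : Ω → ℝ) (hμ0 : ∀ ω, 0 ≤ μ ω) (hμ1 : ∑ ω, μ ω = 1)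
    (τ : Ω → ℕ)
    (Xf : Ω → 𝒳v) (W : ℕ → Ω → 𝒲) (V : ℕ → Ω → 𝒱)
    (Γ : 𝒲 → 𝒱 → ℝ) (hΓ0 : ∀ w v, 0 ≤ Γ w v)
    (hchan : ∀ (i : ℕ) (w : 𝒲) (v : 𝒱) (vp : Fin i → 𝒱) (x : 𝒳v),
      ∑ ω ∈ Finset.univ.filter (fun ω =>
          V i ω = v ∧ W i ω = w ∧ (∀ j : Fin i, V j ω = vp j) ∧ Xf ω = x ∧ i < τ ω), μ ω
        = Γ w v * ∑ ω ∈ Finset.univ.filter (fun ω =>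
            W i ω = w ∧ (∀ j : Fin i, V j ω = vp j) ∧ Xf ω = x ∧ i < τ ω), μ ω) :
    mi μ (fun ω => (List.range (τ ω)).map (fun i => V i ω)) Xf
      ≤ ent μ τ + capacity Γ * ∑ ω, μ ω * (τ ω : ℝ) := by
  obtain ⟨ω₀⟩ : Nonempty Ω := by
    by_contra h
    simp [not_nonempty_iff.1 h] at hμ1
  have hτN : ∀ ω, min (τ ω) (univ.sup τ) = τ ω := fun ω => min_eq_left (le_sup (mem_univ ω))
  have hout : truncOutputs τ V (univ.sup τ) = fun ω => (List.range (τ ω)).map fun i => V i ω :=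
    funext fun ω => by rw [truncOutputs, hτN]
  simpa only [hout, hτN] using mi_truncOutputs_le hμ0 hΓ0 hchan (V 0 ω₀) (univ.sup τ)

/-- Variable-length channel-output bound: if for every `i`, conditioned on `{τ > i}` and on
`(V^{i−1}, X)` (the flags `L^{i-1}` being then all one), the output `V_i` given `W_i` has law
`Γ_{V|W}` and the Markov chain `V_i → W_i → (V^{i−1}, X)` holds, then
`I(V^τ; X) ≤ H(τ) + C·E[τ]`, where `V^τ` is the variable-length output string and `C` is the
capacity of the DMC `Γ`. -/
theorem stmt12 {Ω 𝒳v 𝒲 𝒱 : Type*} [Fintype Ω] [Fintype 𝒲] [Fintype 𝒱]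
    [DecidableEq 𝒳v] [DecidableEq 𝒲] [DecidableEq 𝒱]
    (μ : Ω → ℝ) (hμ0 : ∀ ω, 0 ≤ μ ω) (hμ1 : ∑ ω, μ ω = 1)
    (τ : Ω → ℕ) (hτ : ∀ ω, 1 ≤ τ ω)
    (Xf : Ω → 𝒳v) (W : ℕ → Ω → 𝒲) (V : ℕ → Ω → 𝒱)
    (Γ : 𝒲 → 𝒱 → ℝ) (hΓ0 : ∀ w v, 0 ≤ Γ w v) (hΓ1 : ∀ w, ∑ v, Γ w v = 1)
    (hchan : ∀ (i : ℕ) (w : 𝒲) (v : 𝒱) (vp : Fin i → 𝒱) (x : 𝒳v),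
      ∑ ω ∈ Finset.univ.filter (fun ω =>
          V i ω = v ∧ W i ω = w ∧ (∀ j : Fin i, V j ω = vp j) ∧ Xf ω = x ∧ i < τ ω), μ ω
        = Γ w v * ∑ ω ∈ Finset.univ.filter (fun ω =>
            W i ω = w ∧ (∀ j : Fin i, V j ω = vp j) ∧ Xf ω = x ∧ i < τ ω), μ ω) :
    mi μ (fun ω => (List.range (τ ω)).map (fun i => V i ω)) Xf
      ≤ ent μ τ + capacity Γ * ∑ ω, μ ω * (τ ω : ℝ) :=
  stmt12_general μ hμ0 hμ1 τ Xf W V Γ hΓ0 hchan
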